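/- arXiv:2107.08856 — 2 statements merged into one kernel-verified Lean document; each statement's English description precedes it below -/
import Mathlib

section
/- Let ĝ(t) = 2·min(t, 1−t) and, for real numbers a, b, c, let S(a,b,c) = {t ∈ ℝ : a ≤ t ≤ b and ĝ(t) ≤ c}, with the subspace topology from ℝ. Then for all 0 ≤ a ≤ b ≤ 1 and c ∈ ℝ, the number of connected components of S(a,b,c) is: 1 if c ≥ 1; 2 if 2·max(a, 1−b) ≤ c < 1; 1 if 2·min(a, 1−b) ≤ c < 2·max(a, 1−b); and 0 if c < 2·min(a, 1−b). -/
/-- The hat function `ĝ(t) = 2·min(t, 1−t)`. -/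
def hatg (t : ℝ) : ℝ := 2 * min t (1 - t)

/-- The set `S(a,b,c) = {t ∈ ℝ : a ≤ t ≤ b and g(t) ≤ c}` for a function `g : ℝ → ℝ`. -/
def Slev (g : ℝ → ℝ) (a b c : ℝ) : Set ℝ := {t : ℝ | a ≤ t ∧ t ≤ b ∧ g t ≤ c}

open Set

lemma mem_Slev_hatg {a b c t : ℝ} :
    t ∈ Slev hatg a b c ↔ a ≤ t ∧ t ≤ b ∧ (t ≤ c / 2 ∨ 1 - c / 2 ≤ t) := by
  unfold Slev hatg
  simp only [mem_setOf_eq]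
  constructor
  · rintro ⟨h1, h2, h3⟩
    refine ⟨h1, h2, ?_⟩
    rcases min_le_iff.mp (by linarith : min t (1 - t) ≤ c / 2) with h | h
    · exact Or.inl h
    · exact Or.inr (by linarith)
  · rintro ⟨h1, h2, h3⟩
    refine ⟨h1, h2, ?_⟩
    rcases h3 with h | h
    · have := min_le_left t (1 - t); linarith
    · have := min_le_right t (1 - t); linarith

lemma card_one_of_preconnected {s : Set ℝ} (hs : IsPreconnected s) (hne : s.Nonempty) :
    Nat.card (ConnectedComponents s) = 1 := by
  haveI : PreconnectedSpace s := Subtype.preconnectedSpace hs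
  haveI : Nonempty s := hne.to_subtype
  rw [Nat.card_eq_one_iff_unique]
  refine ⟨⟨fun x y => ?_⟩, Nonempty.map ConnectedComponents.mk inferInstance⟩
  obtain ⟨u, rfl⟩ := ConnectedComponents.surjective_coe x
  obtain ⟨v, rfl⟩ := ConnectedComponents.surjective_coe y
  rw [ConnectedComponents.coe_eq_coe, PreconnectedSpace.connectedComponent_eq_univ,
    PreconnectedSpace.connectedComponent_eq_univ]

/-- In a subtype `T ⊆ ℝ`, two points lying in an interval `Icc p q ⊆ T` give equal
connected components. -/
lemma mk_eq_mk_of_Icc {T : Set ℝ} {p q : ℝ} (hsub : Icc p q ⊆ T) {u v : T}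
    (hu : (u : ℝ) ∈ Icc p q) (hv : (v : ℝ) ∈ Icc p q) :
    (ConnectedComponents.mk u) = ConnectedComponents.mk v := by
  set A : Set T := Subtype.val ⁻¹' Icc p q with hA
  have himg : Subtype.val '' A = Icc p q := by
    rw [hA, Subtype.image_preimage_coe, inter_eq_right.mpr hsub]
  have hApre : IsPreconnected A := by
    rw [← Topology.IsInducing.subtypeVal.isPreconnected_image, himg]
    exact isPreconnected_Icc
  have hsubc : A ⊆ connectedComponent v := hApre.subset_connectedComponent hv
  exact ConnectedComponents.coe_eq_coe'.mpr (hsubc hu)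

lemma card_two_union {p q r s m : ℝ} (hpq : p ≤ q) (hrs : r ≤ s) (hqm : q < m) (hmr : m < r) :
    Nat.card (ConnectedComponents (↥(Icc p q ∪ Icc r s : Set ℝ))) = 2 := by
  set T : Set ℝ := Icc p q ∪ Icc r s with hT
  have hpT : p ∈ T := Or.inl ⟨le_refl p, hpq⟩
  have hrT : r ∈ T := Or.inr ⟨le_refl r, hrs⟩
  have hmT : m ∉ T := by
    rintro (⟨_, h⟩ | ⟨h, _⟩) <;> linarith
  rw [Nat.card_eq_two_iff]
  refine ⟨ConnectedComponents.mk ⟨p, hpT⟩, ConnectedComponents.mk ⟨r, hrT⟩, ?_, ?_⟩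
  · intro heq
    have hmem : (⟨p, hpT⟩ : T) ∈ connectedComponent (⟨r, hrT⟩ : T) :=
      ConnectedComponents.coe_eq_coe'.mp heq
    have hpre : IsPreconnected (Subtype.val '' connectedComponent (⟨r, hrT⟩ : T)) :=
      isPreconnected_connectedComponent.image _ continuous_subtype_val.continuousOn
    have hoc := hpre.ordConnected
    have hp : p ∈ Subtype.val '' connectedComponent (⟨r, hrT⟩ : T) := ⟨_, hmem, rfl⟩
    have hr : r ∈ Subtype.val '' connectedComponent (⟨r, hrT⟩ : T) :=
      ⟨_, mem_connectedComponent, rfl⟩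
    have hm : m ∈ Subtype.val '' connectedComponent (⟨r, hrT⟩ : T) :=
      hoc.out hp hr ⟨by linarith, by linarith⟩
    obtain ⟨w, _, hw⟩ := hm
    exact hmT (hw ▸ w.2)
  · ext z
    simp only [mem_insert_iff, mem_singleton_iff, mem_univ, iff_true]
    obtain ⟨u, rfl⟩ := ConnectedComponents.surjective_coe z
    have hsubL : Icc p q ⊆ T := subset_union_left
    have hsubR : Icc r s ⊆ T := subset_union_right
    rcases u.2 with h | h
    · exact Or.inl (mk_eq_mk_of_Icc hsubL h ⟨le_refl p, hpq⟩)
    · exact Or.inr (mk_eq_mk_of_Icc hsubR h ⟨le_refl r, hrs⟩)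

/-- For the hat function `ĝ(t) = 2·min(t, 1−t)` and all `0 ≤ a ≤ b ≤ 1`, `c ∈ ℝ`,
the number of connected components of `S(a,b,c)` (with the subspace topology from `ℝ`)
is: `1` if `c ≥ 1`; `2` if `2·max(a,1−b) ≤ c < 1`; `1` if
`2·min(a,1−b) ≤ c < 2·max(a,1−b)`; and `0` if `c < 2·min(a,1−b)`. -/
theorem hatg_component_count (a b c : ℝ) (ha : 0 ≤ a) (hab : a ≤ b) (hb : b ≤ 1) :
    Nat.card (ConnectedComponents (Slev hatg a b c)) =
      if 1 ≤ c then 1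
      else if 2 * max a (1 - b) ≤ c then 2
      else if 2 * min a (1 - b) ≤ c then 1
      else 0 := by
  split_ifs with h1 h2 h3
  · -- c ≥ 1 : S = Icc a b
    have hS : Slev hatg a b c = Icc a b := by
      ext t
      rw [mem_Slev_hatg, mem_Icc]
      constructor
      · rintro ⟨h, h', _⟩; exact ⟨h, h'⟩
      · rintro ⟨h, h'⟩
        refine ⟨h, h', ?_⟩
        rcases le_total t (1/2) with ht | ht
        · exact Or.inl (by linarith)
        · exact Or.inr (by linarith)
    rw [hS]
    exact card_one_of_preconnected isPreconnected_Icc ⟨a, le_refl a, hab⟩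
  · -- two components
    push_neg at h1
    have h2a : 2 * a ≤ c := le_trans (by nlinarith [le_max_left a (1-b)]) h2
    have h2b : 2 * (1 - b) ≤ c := le_trans (by nlinarith [le_max_right a (1-b)]) h2
    have hS : Slev hatg a b c = Icc a (c/2) ∪ Icc (1 - c/2) b := by
      ext t
      rw [mem_Slev_hatg, mem_union, mem_Icc, mem_Icc]
      constructor
      · rintro ⟨h, h', hc | hc⟩
        · exact Or.inl ⟨h, hc⟩
        · exact Or.inr ⟨hc, h'⟩
      · rintro (⟨h, h'⟩ | ⟨h, h'⟩)
        · exact ⟨h, by linarith, Or.inl h'⟩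
        · exact ⟨by linarith, h', Or.inr h⟩
    rw [hS]
    exact card_two_union (by linarith) (by linarith) (by linarith : c/2 < 1/2)
      (by linarith : (1:ℝ)/2 < 1 - c/2)
  · -- one component
    push_neg at h1 h2
    rcases le_total a (1 - b) with hcase | hcase
    · rw [min_eq_left hcase] at h3
      rw [max_eq_right hcase] at h2
      -- 2a ≤ c < 2(1-b): S = Icc a (min b (c/2))
      have hS : Slev hatg a b c = Icc a (min b (c/2)) := by
        ext t
        rw [mem_Slev_hatg, mem_Icc, le_min_iff]
        constructor
        · rintro ⟨h, h', hc | hc⟩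
          · exact ⟨h, h', hc⟩
          · exfalso; linarith
        · rintro ⟨h, h', hc⟩
          exact ⟨h, h', Or.inl hc⟩
      rw [hS]
      exact card_one_of_preconnected isPreconnected_Icc
        ⟨a, le_refl a, le_min hab (by linarith)⟩
    · rw [min_eq_right hcase] at h3
      rw [max_eq_left hcase] at h2
      -- 2(1-b) ≤ c < 2a : S = Icc (max a (1-c/2)) b
      have hS : Slev hatg a b c = Icc (max a (1 - c/2)) b := by
        ext t
        rw [mem_Slev_hatg, mem_Icc, max_le_iff]
        constructor
        · rintro ⟨h, h', hc | hc⟩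
          · exfalso; linarith
          · exact ⟨⟨h, hc⟩, h'⟩
        · rintro ⟨⟨h, hc⟩, h'⟩
          exact ⟨h, h', Or.inr hc⟩
      rw [hS]
      exact card_one_of_preconnected isPreconnected_Icc
        ⟨max a (1 - c/2), le_refl _, max_le hab (by linarith)⟩
  · -- empty
    push_neg at h1 h2 h3
    have hma : c < 2 * a := lt_of_lt_of_le h3 (by nlinarith [min_le_left a (1-b)])
    have hmb : c < 2 * (1 - b) := lt_of_lt_of_le h3 (by nlinarith [min_le_right a (1-b)])
    have hS : Slev hatg a b c = (∅ : Set ℝ) := by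
      ext t
      rw [mem_Slev_hatg]
      simp only [mem_empty_iff_false, iff_false]
      rintro ⟨h, h', hc | hc⟩ <;> linarith
    rw [hS]
    haveI : IsEmpty (↥(∅ : Set ℝ)) := Set.isEmpty_coe_sort.mpr rfl
    haveI : IsEmpty (ConnectedComponents ↥(∅ : Set ℝ)) :=
      ConnectedComponents.surjective_coe.isEmpty
    exact Nat.card_of_isEmpty
end

section
/- Let k be a field and let g : ℝ → ℝ be a function that is bounded above on [0,1] (i.e., there exists B ∈ ℝ with g(t) ≤ B for all t ∈ [0,1]). Then the persistence module M_g : P ⥤ ModuleCat k is indecomposable: whenever M_g is isomorphic in the functor category to a biproduct A ⊞ B of two functors A, B : P ⥤ ModuleCat k, either A(p) = 0 for all p ∈ P or B(p) = 0 for all p ∈ P. -/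
/-!
An endomorphism `e` of `M_g` acts on the basis vector of a component `[t]` of `S(p)` by the
scalar by which it acts at the point `(t, t, p.c) ≤ p`, whose sublevel set is a single point.
By naturality two such scalars agree as soon as both points lie below a common point whose
sublevel set is connected, and `S(0, 1, c) = [0, 1]` is connected for every `c ≥ B₀`. Hence
every endomorphism of `M_g` is a scalar, its only idempotents are `0` and `𝟙`, and a
decomposition `M_g ≅ A ⊞ B` yields the idempotent `fst ≫ inl` that forces `A` or `B` to vanish.
-/

open CategoryTheory

noncomputable section

/-- The map induced on connected components by an inclusion of subspaces. -/
def compMap {Y : Type} [TopologicalSpace Y] {A B : Set Y} (h : A ⊆ B) :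
    ConnectedComponents A → ConnectedComponents B :=
  (continuous_inclusion h).connectedComponentsMap

lemma compMap_id {Y : Type} [TopologicalSpace Y] {A : Set Y} (h : A ⊆ A) :
    compMap h = id := by
  funext x
  obtain ⟨y, rfl⟩ := ConnectedComponents.surjective_coe x
  rfl

lemma compMap_comp {Y : Type} [TopologicalSpace Y] {A B C : Set Y}
    (hAB : A ⊆ B) (hBC : B ⊆ C) (hAC : A ⊆ C) :
    compMap hAC = compMap hBC ∘ compMap hAB := by
  funext x
  obtain ⟨y, rfl⟩ := ConnectedComponents.surjective_coe x
  rfl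

/-- The persistence module (valued in free `k`-modules on connected components)
associated to a monotone family of subspaces indexed by a poset: it assigns to `p`
the free `k`-module on the set of connected components of `A p`, and to each
relation `p ≤ q` the `k`-linear map sending the basis element of a connected
component of `A p` to the basis element of the connected component of `A q`
containing it. -/
def compFunctor (k : Type) [Field k] {α : Type} [Preorder α] {Y : Type} [TopologicalSpace Y]
    (A : α → Set Y) (mono : Monotone A) : α ⥤ ModuleCat k where
  obj p := ModuleCat.of k (ConnectedComponents (A p) →₀ k)
  map {p q} h := ModuleCat.ofHom (Finsupp.lmapDomain k k (compMap (mono (leOfHom h))))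
  map_id p := by
    apply ModuleCat.hom_ext
    show Finsupp.lmapDomain k k _ = _
    rw [compMap_id]; exact Finsupp.lmapDomain_id _ _
  map_comp {p q r} f g := by
    apply ModuleCat.hom_ext
    show Finsupp.lmapDomain k k _ = _
    rw [compMap_comp (mono (leOfHom f)) (mono (leOfHom g))]
    exact Finsupp.lmapDomain_comp _ _ _ _

/-- The indexing poset `P = {(a,b,c) ∈ ℝ³ : 0 ≤ a ≤ b ≤ 1}` with
`(a,b,c) ⊑ (a',b',c')` iff `a' ≤ a`, `b ≤ b'` and `c ≤ c'`. -/
def PP : Type := {p : ℝ × ℝ × ℝ // 0 ≤ p.1 ∧ p.1 ≤ p.2.1 ∧ p.2.1 ≤ 1}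

namespace PP

instance : PartialOrder PP where
  le p q := q.1.1 ≤ p.1.1 ∧ p.1.2.1 ≤ q.1.2.1 ∧ p.1.2.2 ≤ q.1.2.2
  le_refl p := ⟨le_refl _, le_refl _, le_refl _⟩
  le_trans p q r h h' := ⟨h'.1.trans h.1, h.2.1.trans h'.2.1, h.2.2.trans h'.2.2⟩
  le_antisymm p q h h' :=
    Subtype.ext (Prod.ext (le_antisymm h'.1 h.1)
      (Prod.ext (le_antisymm h.2.1 h'.2.1) (le_antisymm h.2.2 h'.2.2)))

/-- The coordinate `a` of a point of `P`. -/
def a (p : PP) : ℝ := p.1.1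
/-- The coordinate `b` of a point of `P`. -/
def b (p : PP) : ℝ := p.1.2.1
/-- The coordinate `c` of a point of `P`. -/
def c (p : PP) : ℝ := p.1.2.2

lemma le_def {p q : PP} : p ≤ q ↔ q.a ≤ p.a ∧ p.b ≤ q.b ∧ p.c ≤ q.c := Iff.rfl

end PP

lemma Slev_mono (g : ℝ → ℝ) : Monotone (fun p : PP => Slev g p.a p.b p.c) :=
  fun _ _ h _ ht => ⟨h.1.trans ht.1, ht.2.1.trans h.2.1, ht.2.2.trans h.2.2⟩

/-- The persistence module `M_g : P ⥤ ModuleCat k` of a function `g : ℝ → ℝ`: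
it assigns to `(a,b,c) ∈ P` the free `k`-module on the set of connected components of
the sublevel set `S(a,b,c)`, and to each relation `(a,b,c) ⊑ (a',b',c')` the `k`-linear
map sending the basis element corresponding to a component `C` of `S(a,b,c)` to the basis
element corresponding to the unique component of `S(a',b',c')` containing `C`. -/
def Mg (k : Type) [Field k] (g : ℝ → ℝ) : PP ⥤ ModuleCat k :=
  compFunctor k (fun p : PP => Slev g p.a p.b p.c) (Slev_mono g)

theorem CategoryTheory.Limits.isZero_or_isZero_of_iso_biprod {C : Type*} [Category C]
    [HasZeroMorphisms C] {X Y Z : C} [HasBinaryBiproduct Y Z]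
    (hX : ∀ e : X ⟶ X, e ≫ e = e → e = 0 ∨ e = 𝟙 X) (h : X ≅ Y ⊞ Z) : IsZero Y ∨ IsZero Z := by
  rcases hX (h.hom ≫ biprod.fst ≫ biprod.inl ≫ h.inv) (by simp) with he | he
  · left
    rw [IsZero.iff_id_eq_zero]
    calc 𝟙 Y = biprod.inl ≫ h.inv ≫ (h.hom ≫ biprod.fst ≫ biprod.inl ≫ h.inv) ≫ h.hom ≫
          biprod.fst := by simp
      _ = 0 := by simp [he]
  · right
    rw [IsZero.iff_id_eq_zero]
    calc 𝟙 Z = biprod.inr ≫ h.inv ≫ (h.hom ≫ biprod.fst ≫ biprod.inl ≫ h.inv) ≫ h.hom ≫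
          biprod.snd := by simp [he]
      _ = 0 := by simp

section compFunctor

variable {k : Type} [Field k] {α : Type} [Preorder α] {Y : Type} [TopologicalSpace Y]
  {A : α → Set Y} {mono : Monotone A}

lemma compFunctor_map_single {p q : α} (f : p ⟶ q) (x : ConnectedComponents (A p)) (r : k) :
    (compFunctor k A mono).map f (Finsupp.single x r) =
      Finsupp.single (compMap (mono (leOfHom f)) x) r :=
  Finsupp.mapDomain_single

lemma compFunctor_hom_ext {G : α ⥤ ModuleCat k} {e f : compFunctor k A mono ⟶ G}
    (h : ∀ p x, e.app p (Finsupp.single x 1) = f.app p (Finsupp.single x 1)) : e = f := by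
  ext p : 2
  exact ModuleCat.hom_ext (Finsupp.lhom_ext' fun x => LinearMap.ext_ring (h p x))

lemma compFunctor_exists_app_single_of_subsingleton
    (e : compFunctor k A mono ⟶ compFunctor k A mono) {p : α}
    [Subsingleton (ConnectedComponents (A p))] (x : ConnectedComponents (A p)) :
    ∃ c : k, e.app p (Finsupp.single x 1) = Finsupp.single x c :=
  ⟨_, Finsupp.eq_single_iff.2 ⟨fun y _ => Finset.mem_singleton.2 (Subsingleton.elim y x), rfl⟩⟩

lemma compFunctor_app_single_of_le (e : compFunctor k A mono ⟶ compFunctor k A mono)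
    {p q : α} (hpq : p ≤ q) {x : ConnectedComponents (A p)} {c : k}
    (hx : e.app p (Finsupp.single x 1) = Finsupp.single x c) :
    e.app q (Finsupp.single (compMap (mono hpq) x) 1) =
      Finsupp.single (compMap (mono hpq) x) c := by
  have h : e.app q ((compFunctor k A mono).map (homOfLE hpq) (Finsupp.single x 1)) =
      (compFunctor k A mono).map (homOfLE hpq) (e.app p (Finsupp.single x 1)) :=
    ConcreteCategory.congr_hom (e.naturality (homOfLE hpq)) (Finsupp.single x 1)
  rwa [hx, compFunctor_map_single, compFunctor_map_single] at h

lemma compFunctor_eq_smul_id {e : compFunctor k A mono ⟶ compFunctor k A mono} {c : k}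
    (h : ∀ p x, e.app p (Finsupp.single x 1) = Finsupp.single x c) : e = c • 𝟙 _ :=
  compFunctor_hom_ext fun p x => (h p x).trans (Finsupp.smul_single_one x c).symm

lemma compFunctor_smul_id_injective {p : α} (hp : (A p).Nonempty) :
    Function.Injective fun c : k => c • 𝟙 (compFunctor k A mono) := by
  intro c c' h
  obtain ⟨y, hy⟩ := hp
  let x : ConnectedComponents (A p) := (⟨y, hy⟩ : A p)
  have : c • Finsupp.single x (1 : k) = c' • Finsupp.single x 1 :=
    congrArg (fun f => f.app p (Finsupp.single x 1)) h
  rwa [Finsupp.smul_single_one, Finsupp.smul_single_one,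
    (Finsupp.single_injective _).eq_iff] at this

end compFunctor

namespace PP

def top (c : ℝ) : PP := ⟨(0, 1, c), le_rfl, zero_le_one, le_rfl⟩

def diag (t c : ℝ) (ht : t ∈ Set.Icc (0 : ℝ) 1) : PP := ⟨(t, t, c), ht.1, le_rfl, ht.2⟩

lemma le_top {p : PP} {c : ℝ} (h : p.c ≤ c) : p ≤ top c := ⟨p.2.1, p.2.2.2, h⟩

end PP

section Mg

variable {k : Type} [Field k] {g : ℝ → ℝ}

lemma Slev_zero_one_eq_Icc {c : ℝ} (hc : ∀ t ∈ Set.Icc (0 : ℝ) 1, g t ≤ c) :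
    Slev g 0 1 c = Set.Icc 0 1 :=
  Set.ext fun _ => ⟨fun ht => ⟨ht.1, ht.2.1⟩, fun ht => ⟨ht.1, ht.2, hc _ ht⟩⟩

lemma subsingleton_connectedComponents_top {c : ℝ} (hc : ∀ t ∈ Set.Icc (0 : ℝ) 1, g t ≤ c) :
    Subsingleton
      (_root_.ConnectedComponents (Slev g (PP.top c).a (PP.top c).b (PP.top c).c)) := by
  change Subsingleton (_root_.ConnectedComponents (Slev g 0 1 c))
  have : PreconnectedSpace (Slev g 0 1 c) := by
    rw [Slev_zero_one_eq_Icc hc]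
    exact Subtype.preconnectedSpace isPreconnected_Icc
  exact ConnectedComponents.subsingleton

lemma subsingleton_connectedComponents_diag (t c : ℝ) (ht : t ∈ Set.Icc (0 : ℝ) 1) :
    Subsingleton (_root_.ConnectedComponents
      (Slev g (PP.diag t c ht).a (PP.diag t c ht).b (PP.diag t c ht).c)) := by
  change Subsingleton (_root_.ConnectedComponents (Slev g t t c))
  have : Subsingleton (Slev g t t c) :=
    Set.Subsingleton.coe_sort fun x hx y hy => (le_antisymm hx.2.1 hx.1).trans
      (le_antisymm hy.2.1 hy.1).symm
  infer_instance

theorem Mg_endo_eq_smul_id {B₀ : ℝ} (hB : ∀ t ∈ Set.Icc (0 : ℝ) 1, g t ≤ B₀)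
    (e : Mg k g ⟶ Mg k g) : ∃ c : k, e = c • 𝟙 (Mg k g) := by
  have := subsingleton_connectedComponents_top hB
  let z : _root_.ConnectedComponents (Slev g 0 1 B₀) :=
    (⟨0, le_rfl, zero_le_one, hB 0 ⟨le_rfl, zero_le_one⟩⟩ : Slev g 0 1 B₀)
  obtain ⟨c, hc⟩ := compFunctor_exists_app_single_of_subsingleton e (p := PP.top B₀) z
  refine ⟨c, compFunctor_eq_smul_id fun p x => ?_⟩
  obtain ⟨⟨t, hta, htb, htc⟩, rfl⟩ := ConnectedComponents.surjective_coe x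
  have ht : t ∈ Set.Icc (0 : ℝ) 1 := ⟨p.2.1.trans hta, htb.trans p.2.2.2⟩
  let q := PP.diag t p.c ht
  have := subsingleton_connectedComponents_diag (g := g) t p.c ht
  let y : _root_.ConnectedComponents (Slev g t t p.c) :=
    (⟨t, le_rfl, le_rfl, htc⟩ : Slev g t t p.c)
  obtain ⟨c', hc'⟩ := compFunctor_exists_app_single_of_subsingleton e (p := q) y
  suffices c' = c by
    subst this
    exact compFunctor_app_single_of_le e (show q ≤ p from ⟨hta, htb, le_rfl⟩) hc'
  -- Both scalars are read off on the connected set `S(0, 1, max p.c B₀) = [0, 1]`.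
  have := subsingleton_connectedComponents_top (g := g) (c := max p.c B₀)
    fun s hs => (hB s hs).trans (le_max_right _ _)
  have hq : q ≤ PP.top (max p.c B₀) := PP.le_top (le_max_left p.c B₀)
  have hz : PP.top B₀ ≤ PP.top (max p.c B₀) := PP.le_top (le_max_right p.c B₀)
  have h' := compFunctor_app_single_of_le e hq hc'
  have h := compFunctor_app_single_of_le e hz hc
  rw [Subsingleton.elim (compMap (Slev_mono g hq) y) (compMap (Slev_mono g hz) z)] at h'
  exact Finsupp.single_injective _ (h'.symm.trans h)

theorem Mg_idempotent_eq_zero_or_id {B₀ : ℝ} (hB : ∀ t ∈ Set.Icc (0 : ℝ) 1, g t ≤ B₀)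
    (e : Mg k g ⟶ Mg k g) (he : e ≫ e = e) : e = 0 ∨ e = 𝟙 (Mg k g) := by
  obtain ⟨c, rfl⟩ := Mg_endo_eq_smul_id hB e
  rw [Linear.smul_comp, Linear.comp_smul, Category.id_comp, smul_smul] at he
  have hc : IsIdempotentElem c :=
    compFunctor_smul_id_injective (mono := Slev_mono g) (p := PP.top B₀)
      ⟨0, le_rfl, zero_le_one, hB 0 ⟨le_rfl, zero_le_one⟩⟩ he
  rcases IsIdempotentElem.iff_eq_zero_or_one.1 hc with rfl | rfl
  · exact Or.inl (zero_smul k _)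
  · exact Or.inr (one_smul k _)

end Mg

/-- **Indecomposability of the persistence module of a one-parameter family of functions
on a point** (Theorem `thm:one_param_indec`).  If `g : ℝ → ℝ` is bounded above on `[0,1]`,
then the persistence module `M_g : P ⥤ ModuleCat k` is indecomposable: whenever `M_g`
is isomorphic in the functor category to a biproduct `A ⊞ B`, either `A` is pointwise
zero or `B` is pointwise zero. -/
theorem Mg_indecomposable (k : Type) [Field k] (g : ℝ → ℝ)
    (B₀ : ℝ) (hB : ∀ t ∈ Set.Icc (0:ℝ) 1, g t ≤ B₀)
    (A B : PP ⥤ ModuleCat k) (h : Mg k g ≅ A ⊞ B) :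
    (∀ p : PP, Limits.IsZero (A.obj p)) ∨ (∀ p : PP, Limits.IsZero (B.obj p)) :=
  (Limits.isZero_or_isZero_of_iso_biprod (Mg_idempotent_eq_zero_or_id hB) h).imp
    (fun hA => hA.obj) fun hB' => hB'.obj

end
end
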